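/- For the annulus Ω_r = {r < |z| < 1}, the Bergman metric at √r satisfies lim_{r→0⁺} F_B^{Ω_r}(√r,1)²/log(1/r) = 4. -/

import Mathlib

/-!
At `t = √r` we have `t^(2n) = r^n`, so `β₀`, `√r β₁` and `r β₂` are sums over `n : ℤ` of
`p(n) r^n / (1 - r^(2n+2))` with `p = (X+1) X^j`, plus the term `n = -1`. The term of index `-n-2`
equals `-p(-n-2) r^n / (1 - r^(2n+2))`, so each sum folds to the series over `n ≥ 0` with
coefficient `p(n) - p(-n-2)`, and such a series tends to its `n = 0` term as `r → 0⁺` by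
dominated convergence. Folding gives `√r β₁ = -β₀`, hence `F² = β₂/β₀ - 1/r`, and dividing by
`log(1/r)` leaves `(Q₂ - Q₀) / (r log(1/r) Q₀ + 1/2)`, where `Q_j` is the folded series of
`(X+1) X^j`; here `Q₀ → 2`, `Q₂ → 4` and `r log(1/r) → 0`.
-/

open Real Filter Topology

/-- `β₀(r,t) = B_r(t,t)`: diagonal Bergman kernel of the annulus `{r < |z| < 1}` at a point
of modulus `t`:
`B_r(z,z) = (1/π)[Σ_{n≠-1} (n+1)|z|^{2n}/(1-r^{2n+2}) + |z|⁻²/(2 log(1/r))]`. -/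
noncomputable def beta0 (r t : ℝ) : ℝ :=
  (1/π) * ∑' n : ℤ, if n = -1 then t ^ (-2 : ℤ) / (2 * Real.log (1/r))
    else ((n : ℝ) + 1) * t ^ (2*n) / (1 - r ^ (2*n+2))

/-- `β₁(r,t) = ∂_z B_r(z,z)` at `z = t > 0`. -/
noncomputable def beta1 (r t : ℝ) : ℝ :=
  (1/π) * ∑' n : ℤ, if n = -1 then -(t ^ (-3 : ℤ)) / (2 * Real.log (1/r))
    else ((n : ℝ) + 1) * (n : ℝ) * t ^ (2*n-1) / (1 - r ^ (2*n+2))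

/-- `β₂(r,t) = ∂_z∂_z̄ B_r(z,z)` at `z = t > 0`. -/
noncomputable def beta2 (r t : ℝ) : ℝ :=
  (1/π) * ∑' n : ℤ, if n = -1 then t ^ (-4 : ℤ) / (2 * Real.log (1/r))
    else ((n : ℝ) + 1) * (n : ℝ)^2 * t ^ (2*n-2) / (1 - r ^ (2*n+2))

/-- The squared Bergman metric of the annulus at the point `t` in the unit direction:
`F_B(t,1)² = (β₀β₂ - β₁²)/β₀²`. -/
noncomputable def bergmanMetricSq (r t : ℝ) : ℝ :=
  (beta0 r t * beta2 r t - (beta1 r t)^2) / (beta0 r t)^2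

open Polynomial

lemma Polynomial.summable_abs_eval_mul_geometric (p : ℝ[X]) {ρ : ℝ} (hρ0 : 0 ≤ ρ) (hρ1 : ρ < 1) :
    Summable fun n : ℕ => |p.eval (n : ℝ)| * ρ ^ n := by
  have hρ : ‖ρ‖ < 1 := by rwa [Real.norm_eq_abs, abs_of_nonneg hρ0]
  refine Summable.of_nonneg_of_le (fun n => by positivity) (fun n => ?_)
    (summable_sum (s := Finset.range (p.natDegree + 1)) fun i _ =>
      (summable_pow_mul_geometric_of_norm_lt_one i hρ).mul_left |p.coeff i|)
  calc |p.eval (n : ℝ)| * ρ ^ n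
      ≤ (∑ i ∈ Finset.range (p.natDegree + 1), |p.coeff i| * (n : ℝ) ^ i) * ρ ^ n := by
        gcongr
        rw [eval_eq_sum_range]
        refine (Finset.abs_sum_le_sum_abs _ _).trans_eq (Finset.sum_congr rfl fun i _ => ?_)
        rw [abs_mul, abs_pow, Nat.abs_cast]
    _ = ∑ i ∈ Finset.range (p.natDegree + 1), |p.coeff i| * ((n : ℝ) ^ i * ρ ^ n) := by
        rw [Finset.sum_mul]; simp only [mul_assoc]

section annulus

variable {r : ℝ}

lemma one_sub_pow_two_mul_add_two_pos (hr0 : 0 ≤ r) (hr1 : r < 1) (n : ℕ) :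
    0 < 1 - r ^ (2 * n + 2) := by
  linarith [pow_lt_one₀ hr0 hr1 (n := 2 * n + 2) (by omega)]

lemma one_sub_sq_le_one_sub_pow_two_mul_add_two (hr0 : 0 ≤ r) (hr1 : r ≤ 1) (n : ℕ) :
    1 - r ^ 2 ≤ 1 - r ^ (2 * n + 2) := by
  linarith [pow_le_pow_of_le_one hr0 hr1 (show 2 ≤ 2 * n + 2 by omega)]

lemma abs_annulusSeries_term_le (p : ℝ[X]) {ρ : ℝ} (hr0 : 0 ≤ r) (hrρ : r ≤ ρ) (hρ1 : ρ < 1)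
    (n : ℕ) :
    |p.eval (n : ℝ) * r ^ n / (1 - r ^ (2 * n + 2))| ≤ |p.eval (n : ℝ)| * ρ ^ n / (1 - ρ ^ 2) := by
  have hρ0 : 0 ≤ ρ := hr0.trans hrρ
  have hρ2 : 0 < 1 - ρ ^ 2 := by nlinarith
  rw [abs_div, abs_mul, abs_pow, abs_of_nonneg hr0,
    abs_of_pos (one_sub_pow_two_mul_add_two_pos hr0 (hrρ.trans_lt hρ1) n)]
  refine div_le_div₀ (by positivity) (by gcongr) hρ2 ?_
  calc 1 - ρ ^ 2 ≤ 1 - r ^ 2 := by gcongr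
    _ ≤ 1 - r ^ (2 * n + 2) := one_sub_sq_le_one_sub_pow_two_mul_add_two hr0 (by linarith) n

noncomputable def annulusSeries (p : ℝ[X]) (r : ℝ) : ℝ :=
  ∑' n : ℕ, p.eval (n : ℝ) * r ^ n / (1 - r ^ (2 * n + 2))

lemma summable_annulusSeries (p : ℝ[X]) (hr0 : 0 ≤ r) (hr1 : r < 1) :
    Summable fun n : ℕ => p.eval (n : ℝ) * r ^ n / (1 - r ^ (2 * n + 2)) :=
  Summable.of_norm_bounded ((p.summable_abs_eval_mul_geometric hr0 hr1).div_const _)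
    (abs_annulusSeries_term_le p hr0 le_rfl hr1)

lemma annulusSeries_nonneg {p : ℝ[X]} (hp : ∀ n : ℕ, 0 ≤ p.eval (n : ℝ)) (hr0 : 0 ≤ r)
    (hr1 : r < 1) : 0 ≤ annulusSeries p r :=
  tsum_nonneg fun n =>
    div_nonneg (mul_nonneg (hp n) (pow_nonneg hr0 n)) (one_sub_pow_two_mul_add_two_pos hr0 hr1 n).le

lemma annulusSeries_neg (p : ℝ[X]) (r : ℝ) : annulusSeries (-p) r = -annulusSeries p r := by
  simp only [annulusSeries, eval_neg, neg_mul, neg_div, tsum_neg]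

lemma tendsto_annulusSeries (p : ℝ[X]) :
    Tendsto (annulusSeries p) (𝓝[>] 0) (𝓝 (p.eval 0)) := by
  have hlim : ∀ n : ℕ, Tendsto (fun r : ℝ => p.eval (n : ℝ) * r ^ n / (1 - r ^ (2 * n + 2)))
      (𝓝[>] 0) (𝓝 (if n = 0 then p.eval 0 else 0)) := by
    intro n
    have hc : ContinuousAt (fun r : ℝ => p.eval (n : ℝ) * r ^ n / (1 - r ^ (2 * n + 2))) 0 := by
      fun_prop (disch := simp)
    refine (hc.tendsto.mono_left nhdsWithin_le_nhds).trans_eq ?_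
    rcases n with _ | n <;> simp
  have hsum := tendsto_tsum_of_dominated_convergence
    (((p.summable_abs_eval_mul_geometric (ρ := 1 / 2) (by norm_num) (by norm_num)).div_const
      (1 - (1 / 2) ^ 2))) hlim ?_
  · rwa [tsum_ite_eq] at hsum
  filter_upwards [Ioo_mem_nhdsGT (show (0 : ℝ) < 1 / 2 by norm_num)] with r hr n
  exact abs_annulusSeries_term_le p hr.1.le hr.2.le (by norm_num) n

lemma annulusSeries_sub (p q : ℝ[X]) (hr0 : 0 ≤ r) (hr1 : r < 1) :
    annulusSeries (p - q) r = annulusSeries p r - annulusSeries q r := by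
  simp only [annulusSeries, eval_sub, sub_mul, sub_div]
  exact (summable_annulusSeries p hr0 hr1).tsum_sub (summable_annulusSeries q hr0 hr1)

lemma zpow_neg_div_one_sub_zpow_neg (hr : r ≠ 0) (n : ℕ) :
    r ^ (-((n : ℤ) + 2)) / (1 - r ^ (2 * (-((n : ℤ) + 2)) + 2))
      = -(r ^ n / (1 - r ^ (2 * n + 2))) := by
  have hnum : r ^ (-((n : ℤ) + 2)) = r ^ n / r ^ (2 * n + 2) := by
    rw [← zpow_natCast, ← zpow_natCast, ← zpow_sub₀ hr]; push_cast; ring_nf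
  have hden : r ^ (2 * (-((n : ℤ) + 2)) + 2) = (r ^ (2 * n + 2))⁻¹ := by
    rw [← zpow_natCast, ← zpow_neg]; push_cast; ring_nf
  have hpow : r ^ (2 * n + 2) ≠ 0 := by positivity
  rw [hnum, hden, div_div, mul_sub, mul_one, mul_inv_cancel₀ hpow, ← neg_sub, div_neg]

noncomputable def foldPoly (p : ℝ[X]) : ℝ[X] := p - p.comp (-X - 2)

lemma tsum_int_eq_annulusSeries_foldPoly (p : ℝ[X]) (s : ℝ) (hr0 : 0 < r) (hr1 : r < 1) :
    ∑' n : ℤ, (if n = -1 then s else p.eval (n : ℝ) * r ^ n / (1 - r ^ (2 * n + 2)))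
      = annulusSeries (foldPoly p) r + s := by
  set F : ℤ → ℝ := fun n => if n = -1 then s else p.eval (n : ℝ) * r ^ n / (1 - r ^ (2 * n + 2))
  have hnat : HasSum (fun n : ℕ => F n) (annulusSeries p r) := by
    convert (summable_annulusSeries p hr0.le hr1).hasSum using 1
    · funext n
      simp only [F, Int.reduceNeg, reduceCtorEq, ↓reduceIte, Int.cast_natCast, zpow_natCast]
      norm_cast
    · rfl
  have hneg : HasSum (fun n : ℕ => F (-(n + 1))) (-annulusSeries (p.comp (-X - 2)) r + s) := by
    have hterm : ∀ n : ℕ, F (-(((n + 1 : ℕ) : ℤ) + 1))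
        = -((p.comp (-X - 2)).eval (n : ℝ) * r ^ n / (1 - r ^ (2 * n + 2))) := by
      intro n
      rw [show -(((n + 1 : ℕ) : ℤ) + 1) = -((n : ℤ) + 2) by push_cast; ring]
      simp only [F, if_neg (show -((n : ℤ) + 2) ≠ -1 by omega), mul_div_assoc,
        zpow_neg_div_one_sub_zpow_neg hr0.ne' n, eval_comp]
      rw [mul_neg]
      congr 3
      simp only [eval_sub, eval_neg, eval_X, eval_ofNat]
      push_cast
      ring
    refine (hasSum_nat_add_iff' 1).mp ?_
    simp only [hterm, Finset.sum_range_one]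
    have hminus_one : F (-(((0 : ℕ) : ℤ) + 1)) = s := if_pos (by norm_num)
    rw [hminus_one, add_sub_cancel_right]
    exact (summable_annulusSeries _ hr0.le hr1).hasSum.neg
  rw [(hnat.of_nat_of_neg_add_one hneg).tsum_eq, foldPoly, annulusSeries_sub _ _ hr0.le hr1]
  ring

lemma sqrt_zpow_two_mul (hr0 : 0 ≤ r) (k : ℤ) : √r ^ (2 * k) = r ^ k := by
  rw [zpow_mul, zpow_two, Real.mul_self_sqrt hr0]

lemma beta0_sqrt (hr0 : 0 < r) (hr1 : r < 1) :
    beta0 r √r = (1 / π) * (annulusSeries (foldPoly (X + 1)) r + r⁻¹ / (2 * log (1 / r))) := by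
  rw [beta0, ← tsum_int_eq_annulusSeries_foldPoly _ _ hr0 hr1]
  congr 1
  refine tsum_congr fun n => ?_
  split_ifs
  · rw [show (-2 : ℤ) = 2 * (-1) by norm_num, sqrt_zpow_two_mul hr0.le, zpow_neg_one]
  · simp [sqrt_zpow_two_mul hr0.le]

lemma beta1_sqrt_mul_sqrt (hr0 : 0 < r) (hr1 : r < 1) :
    beta1 r √r * √r = (1 / π) *
      (annulusSeries (foldPoly ((X + 1) * X)) r + -r⁻¹ / (2 * log (1 / r))) := by
  have hs : √r ≠ 0 := (Real.sqrt_pos.mpr hr0).ne'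
  rw [beta1, mul_assoc, ← tsum_mul_right, ← tsum_int_eq_annulusSeries_foldPoly _ _ hr0 hr1]
  congr 1
  refine tsum_congr fun n => ?_
  split_ifs
  · rw [neg_div, neg_mul, div_mul_eq_mul_div, ← zpow_add_one₀ hs,
      show (-3 : ℤ) + 1 = 2 * (-1) by norm_num, sqrt_zpow_two_mul hr0.le, zpow_neg_one, neg_div]
  · rw [div_mul_eq_mul_div, mul_assoc, ← zpow_add_one₀ hs, sub_add_cancel,
      sqrt_zpow_two_mul hr0.le]
    simp

lemma beta2_sqrt_mul (hr0 : 0 < r) (hr1 : r < 1) :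
    beta2 r √r * r = (1 / π) *
      (annulusSeries (foldPoly ((X + 1) * X ^ 2)) r + r⁻¹ / (2 * log (1 / r))) := by
  rw [beta2, mul_assoc, ← tsum_mul_right, ← tsum_int_eq_annulusSeries_foldPoly _ _ hr0 hr1]
  congr 1
  refine tsum_congr fun n => ?_
  split_ifs
  · rw [div_mul_eq_mul_div, show (-4 : ℤ) = 2 * (-2) by norm_num, sqrt_zpow_two_mul hr0.le,
      zpow_neg, zpow_two, mul_inv, inv_mul_cancel_right₀ hr0.ne']
  · rw [div_mul_eq_mul_div, mul_assoc, show 2 * n - 2 = 2 * (n - 1) by ring,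
      sqrt_zpow_two_mul hr0.le, zpow_sub_one₀ hr0.ne', inv_mul_cancel_right₀ hr0.ne']
    simp

lemma beta1_sqrt_mul_sqrt_eq_neg_beta0 (hr0 : 0 < r) (hr1 : r < 1) :
    beta1 r √r * √r = -beta0 r √r := by
  have hfold : foldPoly ((X + 1) * X) = -foldPoly (X + 1) := by
    simp only [foldPoly, mul_comp, add_comp, X_comp, one_comp]; ring
  rw [beta1_sqrt_mul_sqrt hr0 hr1, hfold, annulusSeries_neg, beta0_sqrt hr0 hr1]
  ring

lemma bergmanMetricSq_sqrt_div_log (hr0 : 0 < r) (hr1 : r < 1) :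
    bergmanMetricSq r √r / log (1 / r) =
      (annulusSeries (foldPoly ((X + 1) * X ^ 2)) r - annulusSeries (foldPoly (X + 1)) r) /
      (r * log (1 / r) * annulusSeries (foldPoly (X + 1)) r + 1 / 2) := by
  have hL : 0 < log (1 / r) := by rw [one_div, log_inv]; linarith [log_neg hr0 hr1]
  have hQ₀ : 0 ≤ annulusSeries (foldPoly (X + 1)) r :=
    annulusSeries_nonneg (fun n => by
      simp only [foldPoly, eval_sub, eval_comp, eval_add, eval_X, eval_one, eval_neg, eval_ofNat]
      linarith) hr0.le hr1
  have hs : 0 < √r := Real.sqrt_pos.mpr hr0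
  rw [bergmanMetricSq, eq_div_of_mul_eq hs.ne' (beta1_sqrt_mul_sqrt_eq_neg_beta0 hr0 hr1),
    eq_div_of_mul_eq hr0.ne' (beta2_sqrt_mul hr0 hr1), beta0_sqrt hr0 hr1]
  generalize annulusSeries (foldPoly (X + 1)) r = Q₀ at hQ₀ ⊢
  generalize annulusSeries (foldPoly ((X + 1) * X ^ 2)) r = Q₂
  generalize log (1 / r) = L at hL ⊢
  have hsr : √r ^ 2 = r := Real.sq_sqrt hr0.le
  generalize √r = s at hs hsr ⊢
  subst hsr
  field_simp
  ring

lemma tendsto_mul_log_one_div_nhdsGT_zero :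
    Tendsto (fun r : ℝ => r * log (1 / r)) (𝓝[>] 0) (𝓝 0) := by
  have h := (continuous_mul_log.tendsto 0).neg.mono_left (nhdsWithin_le_nhds (s := Set.Ioi 0))
  simp only [zero_mul, neg_zero] at h
  refine h.congr fun r => ?_
  rw [one_div, log_inv, mul_neg]

end annulus

/-- For the annulus `Ω_r = {r < |z| < 1}`, the Bergman metric at `√r` satisfies
`lim_{r→0⁺} F_B^{Ω_r}(√r,1)²/log(1/r) = 4`. -/
theorem bergman_metric_annulus_at_sqrt :
    Tendsto (fun r : ℝ => bergmanMetricSq r (Real.sqrt r) / Real.log (1/r))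
      (𝓝[>] (0:ℝ)) (𝓝 4) := by
  set P₀ : ℝ[X] := foldPoly (X + 1)
  set P₂ : ℝ[X] := foldPoly ((X + 1) * X ^ 2)
  have hlim := ((tendsto_annulusSeries P₂).sub (tendsto_annulusSeries P₀)).div
    ((tendsto_mul_log_one_div_nhdsGT_zero.mul (tendsto_annulusSeries P₀)).add
      (tendsto_const_nhds (x := (1 / 2 : ℝ))))
    (by norm_num)
  have hvalue : (P₂.eval 0 - P₀.eval 0) / (0 * P₀.eval 0 + 1 / 2) = (4 : ℝ) := by
    norm_num [P₀, P₂, foldPoly]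
  rw [hvalue] at hlim
  refine hlim.congr' ?_
  filter_upwards [Ioo_mem_nhdsGT one_pos] with r hr
  exact (bergmanMetricSq_sqrt_div_log hr.1 hr.2).symm
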